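/- arXiv:1504.07940 — 5 statements merged into one kernel-verified Lean document; each statement's English description precedes it below -/
import Mathlib

section
/- Let d ≥ 1, let S be a finite set of points in ℝ^d in general position (no d+2 points of S lie on a common sphere), and let T be a Delaunay triangulation of S, i.e., a finite collection of d-dimensional simplices, each with its d+1 affinely independent vertices belonging to S, such that no point of S lies strictly inside the circumsphere of any simplex of T (for every τ ∈ T and every s ∈ S, dist(s, circumcenter(τ)) ≥ circumradius(τ)), and the convex hulls of the simplices of T cover the convex hull of S. Let x be a point of the convex hull of S with x ∉ S, and let x* ∈ S be a nearest point of S to x (dist(x, x*) = dist(x, S)). Then there exists a simplex τ ∈ T having x* among its vertices such that x lies in the closed circumball of τ, i.e., dist(x, circumcenter(τ)) ≤ circumradius(τ). -/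
open scoped RealInnerProductSpace

/-- The function `z ↦ ‖z - c‖² - ‖z - x‖²` is affine: explicit form. -/
lemma delaunay_aux_wid {E : Type*} [NormedAddCommGroup E] [InnerProductSpace ℝ E] (z c x : E) :
    ‖z - c‖^2 - ‖z - x‖^2 = 2*⟪z, x - c⟫ + (‖c‖^2 - ‖x‖^2) := by
  rw [norm_sub_sq_real, norm_sub_sq_real, inner_sub_right]; ring

lemma delaunay_aux_nrange {α β : Type*} [Fintype α] (f : α → β) (hf : Function.Injective f) :
    (Set.range f).ncard = Fintype.card α := by
  rw [← Nat.card_coe_set_eq, Nat.card_range_of_injective hf, Nat.card_eq_fintype_card]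

set_option maxHeartbeats 1600000 in
/-- Let `d ≥ 1`, let `S` be a finite set of points in `ℝ^d` in general
position (no `d+2` points of `S` lie on a common sphere), and let `T` be a Delaunay
triangulation of `S`.  Let `x` be a point of the convex hull of `S` with `x ∉ S`, and let
`x* ∈ S` be a nearest point of `S` to `x`.  Then there exists a simplex `τ ∈ T` having
`x*` among its vertices such that `x` lies in the closed circumball of `τ`. -/
theorem delaunay_near_visible (d : ℕ) (hd : 1 ≤ d)
    (S : Finset (EuclideanSpace ℝ (Fin d)))
    (hgen : ∀ (c : EuclideanSpace ℝ (Fin d)) (r : ℝ),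
      ({s : EuclideanSpace ℝ (Fin d) | s ∈ S ∧ dist s c = r}).ncard ≤ d + 1)
    (T : Set (Affine.Simplex ℝ (EuclideanSpace ℝ (Fin d)) d)) (hTfin : T.Finite)
    (hvert : ∀ τ ∈ T, ∀ i, τ.points i ∈ S)
    (hdelaunay : ∀ τ ∈ T, ∀ s ∈ S, τ.circumradius ≤ dist s τ.circumcenter)
    (hcover : convexHull ℝ (S : Set (EuclideanSpace ℝ (Fin d))) ⊆
      ⋃ τ ∈ T, convexHull ℝ (Set.range τ.points))
    (x : EuclideanSpace ℝ (Fin d))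
    (hx : x ∈ convexHull ℝ (S : Set (EuclideanSpace ℝ (Fin d)))) (hxS : x ∉ S)
    (xstar : EuclideanSpace ℝ (Fin d)) (hxstarS : xstar ∈ S)
    (hnearest : dist x xstar = Metric.infDist x (S : Set (EuclideanSpace ℝ (Fin d)))) :
    ∃ τ ∈ T, (∃ i, τ.points i = xstar) ∧ dist x τ.circumcenter ≤ τ.circumradius := by
  classical
  have hDle : ∀ s ∈ S, dist x xstar ≤ dist x s := fun s hs => by
    rw [hnearest]; exact Metric.infDist_le_dist_of_mem hs
  set D : ℝ := dist x xstar with hDdef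
  have hd0 : (0:ℝ) ≤ D := dist_nonneg
  set t : ℕ → ℝ := fun n => 1 / (n + 1) with htdef
  have ht0 : ∀ n, 0 < t n := fun n => by positivity
  have ht1 : ∀ n, t n ≤ 1 := fun n => by
    rw [htdef]
    rw [div_le_one (by positivity)]
    have : (0:ℝ) ≤ (n:ℝ) := Nat.cast_nonneg n
    linarith
  set y : ℕ → EuclideanSpace ℝ (Fin d) := fun n => (1 - t n) • xstar + t n • x with hydef
  have hyS : ∀ n, y n ∈ convexHull ℝ (S : Set (EuclideanSpace ℝ (Fin d))) := fun n =>
    (convex_convexHull ℝ _) (subset_convexHull ℝ _ hxstarS) hx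
      (by linarith [ht1 n]) (le_of_lt (ht0 n)) (by ring)
  have hex : ∀ n, ∃ τ, τ ∈ T ∧ y n ∈ convexHull ℝ (Set.range τ.points) := fun n => by
    have := hcover (hyS n)
    simpa [Set.mem_iUnion] using this
  choose f hfT hfy using hex
  haveI : Finite ↥T := hTfin.to_subtype
  obtain ⟨σ', hσ'⟩ := Finite.exists_infinite_fiber
    (fun n => (⟨f n, hfT n⟩ : {τ // τ ∈ T}))
  set σ := σ'.1 with hσdef
  have hσT : σ ∈ T := σ'.2
  have hNinf : {n : ℕ | f n = σ}.Infinite := by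
    have h1 : ((fun n => (⟨f n, hfT n⟩ : {τ // τ ∈ T})) ⁻¹' {σ'}).Infinite :=
      Set.infinite_coe_iff.mp hσ'
    refine h1.mono ?_
    intro n hn
    simp only [Set.mem_preimage, Set.mem_singleton_iff] at hn
    exact congrArg Subtype.val hn
  have hyσ : ∀ n ∈ {n : ℕ | f n = σ}, y n ∈ convexHull ℝ (Set.range σ.points) :=
    fun n hn => hn ▸ hfy n
  have hconvclosed : IsClosed (convexHull ℝ (Set.range σ.points)) :=
    (Set.finite_range _).isClosed_convexHull ℝ
  have hxstarconv : xstar ∈ convexHull ℝ (Set.range σ.points) := by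
    rw [← hconvclosed.closure_eq, Metric.mem_closure_iff]
    intro ε hε
    obtain ⟨n, hn, hlt⟩ := hNinf.exists_gt ⌈D / ε⌉₊
    refine ⟨y n, hyσ n hn, ?_⟩
    have heq : dist xstar (y n) = t n * D := by
      rw [dist_eq_norm, hydef]
      have h2 : xstar - ((1 - t n) • xstar + t n • x) = t n • (xstar - x) := by
        rw [smul_sub, sub_smul, one_smul]; abel
      rw [h2, norm_smul, Real.norm_eq_abs, abs_of_pos (ht0 n), hDdef,
        ← dist_eq_norm, dist_comm]
    rw [heq]
    have hcl : D / ε ≤ (⌈D / ε⌉₊ : ℝ) := Nat.le_ceil _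
    have hcn : ((⌈D / ε⌉₊ : ℕ) : ℝ) < (n : ℝ) := by exact_mod_cast hlt
    have hDn : D < ε * ((n:ℝ) + 1) := by
      have : D / ε < (n:ℝ) := lt_of_le_of_lt hcl hcn
      have := (div_lt_iff₀ hε).mp this
      nlinarith
    rw [htdef]
    rw [div_mul_eq_mul_div, one_mul, div_lt_iff₀ (by positivity)]
    linarith [hDn]
  have hcball : convexHull ℝ (Set.range σ.points) ⊆
      Metric.closedBall σ.circumcenter σ.circumradius := by
    refine convexHull_min ?_ (convex_closedBall _ _)
    rintro p ⟨i, rfl⟩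
    simp [Metric.mem_closedBall, (σ.dist_circumcenter_eq_circumradius i).le]
  have hxstar_on : dist xstar σ.circumcenter = σ.circumradius :=
    le_antisymm (hcball hxstarconv) (hdelaunay σ hσT xstar hxstarS)
  have hvertex : ∃ i, σ.points i = xstar := by
    by_contra hcon
    push_neg at hcon
    have hxnotin : xstar ∉ Set.range σ.points := by
      rintro ⟨i, hi⟩; exact hcon i hi
    have hsub : insert xstar (Set.range σ.points) ⊆
        {s : EuclideanSpace ℝ (Fin d) | s ∈ S ∧ dist s σ.circumcenter = σ.circumradius} := by
      rintro p (rfl | ⟨i, rfl⟩)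
      · exact ⟨hxstarS, hxstar_on⟩
      · exact ⟨hvert σ hσT i, σ.dist_circumcenter_eq_circumradius i⟩
    have hfin : {s : EuclideanSpace ℝ (Fin d) |
        s ∈ S ∧ dist s σ.circumcenter = σ.circumradius}.Finite :=
      S.finite_toSet.subset (fun p hp => hp.1)
    have hcard : (insert xstar (Set.range σ.points)).ncard = d + 2 := by
      rw [Set.ncard_insert_of_notMem hxnotin (Set.finite_range _),
        delaunay_aux_nrange _ σ.independent.injective, Fintype.card_fin]
    have h1 := Set.ncard_le_ncard hsub hfin
    have h2 := hgen σ.circumcenter σ.circumradius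
    omega
  obtain ⟨i, hi⟩ := hvertex
  refine ⟨σ, hσT, ⟨i, hi⟩, ?_⟩
  obtain ⟨n, hn, -⟩ := hNinf.exists_gt 0
  set c := σ.circumcenter with hcdef
  set r := σ.circumradius with hrdef
  have hr0 : 0 ≤ r := σ.circumradius_nonneg
  set b : ℝ := (r^2 - D^2 - (‖c‖^2 - ‖x‖^2))/2 with hbdef
  have hlinmap : IsLinearMap ℝ (fun z : EuclideanSpace ℝ (Fin d) => ⟪z, x - c⟫) :=
    ⟨fun a a' => inner_add_left a a' (x - c), fun s a => real_inner_smul_left a (x - c) s⟩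
  have hhalf : convexHull ℝ (Set.range σ.points) ⊆ {z | ⟪z, x - c⟫ ≤ b} := by
    refine convexHull_min ?_ (convex_halfSpace_le hlinmap b)
    rintro p ⟨j, rfl⟩
    have h1 : ‖σ.points j - c‖ = r := by
      rw [← dist_eq_norm]; exact σ.dist_circumcenter_eq_circumradius j
    have h2 : D ≤ ‖σ.points j - x‖ := by
      rw [← dist_eq_norm, dist_comm]; exact hDle _ (hvert σ hσT j)
    have h3 := delaunay_aux_wid (σ.points j) c x
    have h1sq : ‖σ.points j - c‖^2 = r^2 := by rw [h1]
    have h5 : D^2 ≤ ‖σ.points j - x‖^2 := by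
      have := pow_le_pow_left₀ hd0 h2 2
      simpa using this
    simp only [Set.mem_setOf_eq, hbdef]
    linarith
  have hyb : ⟪y n, x - c⟫ ≤ b := hhalf (hyσ n hn)
  have hlin : ⟪y n, x - c⟫ = (1 - t n) * ⟪xstar, x - c⟫ + t n * ⟪x, x - c⟫ := by
    simp only [hydef]
    rw [inner_add_left, real_inner_smul_left, real_inner_smul_left]
  have hxb : 2*⟪xstar, x - c⟫ + (‖c‖^2 - ‖x‖^2) = r^2 - D^2 := by
    have h4 := delaunay_aux_wid xstar c x
    rw [← dist_eq_norm, ← dist_eq_norm, hxstar_on, dist_comm xstar x, ← hDdef] at h4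
    linarith
  have hxv : ‖x - c‖^2 ≤ r^2 - D^2 := by
    have hwx := delaunay_aux_wid x c x
    simp only [sub_self, norm_zero] at hwx
    have htn := ht0 n
    have hA : ⟪xstar, x - c⟫ = b := by rw [hbdef]; linarith
    rw [hlin, hA] at hyb
    have hdiv : t n * ⟪x, x - c⟫ ≤ t n * b := by linarith
    have h2B : ⟪x, x - c⟫ ≤ b := le_of_mul_le_mul_left hdiv htn
    rw [hbdef] at h2B
    linarith
  rw [dist_eq_norm]
  have hsq : ‖x - c‖^2 ≤ r^2 := by nlinarith [hxv, sq_nonneg D]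
  nlinarith [hsq, hr0, norm_nonneg (x - c)]
end

section
/- Let d ≥ 1 and let x₀, …, x_d be d+1 affinely independent points in ℝ^d forming a simplex with circumcenter c and circumradius r. Then every point x of the convex hull of {x₀, …, x_d} lies within distance r of at least one vertex: there exists an index i with ‖x − xᵢ‖ ≤ r. Consequently dist(x, {x₀, …, x_d}) ≤ r for all x in the geometric simplex. -/
open Finset in
/-- Every point of the geometric simplex (the convex hull of `d+1`
affinely independent points in `ℝ^d` with circumcenter `c` and circumradius `r`) lies
within distance `r` of at least one vertex; consequently `dist(x, {x₀,…,x_d}) ≤ r`. -/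
theorem simplex_point_near_vertex (d : ℕ) (hd : 1 ≤ d)
    (pts : Fin (d + 1) → EuclideanSpace ℝ (Fin d)) (hpts : AffineIndependent ℝ pts)
    (c : EuclideanSpace ℝ (Fin d)) (r : ℝ) (hr : 0 ≤ r)
    (hcirc : ∀ i, dist (pts i) c = r)
    (x : EuclideanSpace ℝ (Fin d)) (hx : x ∈ convexHull ℝ (Set.range pts)) :
    (∃ i, ‖x - pts i‖ ≤ r) ∧ Metric.infDist x (Set.range pts) ≤ r := by
  rw [convexHull_range_eq_exists_affineCombination] at hx
  obtain ⟨s, w, hw0, hw1, hxc⟩ := hx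
  have hxlin : x = ∑ i ∈ s, w i • pts i := by
    rw [← hxc, Finset.affineCombination_eq_linear_combination s pts w hw1]
  have hnorm : ∀ i, ‖pts i - c‖ = r := fun i => by
    rw [← dist_eq_norm]; exact hcirc i
  -- key identity: weighted sum of squared distances
  have key : ∑ i ∈ s, w i * ‖x - pts i‖ ^ 2 = r ^ 2 - ‖x - c‖ ^ 2 := by
    have expand : ∀ y z : EuclideanSpace ℝ (Fin d),
        ‖y - z‖ ^ 2 = ‖y‖ ^ 2 - 2 * inner ℝ y z + ‖z‖ ^ 2 := fun y z => by
      rw [@norm_sub_sq_real]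
    have hinner : (inner ℝ x x : ℝ) = ∑ i ∈ s, w i * (inner ℝ x (pts i) : ℝ) := by
      nth_rewrite 2 [hxlin]
      rw [inner_sum]
      exact Finset.sum_congr rfl fun i _ => by rw [real_inner_smul_right]
    have hinnerc : (inner ℝ x c : ℝ) = ∑ i ∈ s, w i * (inner ℝ (pts i) c : ℝ) := by
      conv_lhs => rw [hxlin]
      rw [sum_inner]
      exact Finset.sum_congr rfl fun i _ => by rw [real_inner_smul_left]
    have hpt : ∀ i, ‖pts i‖ ^ 2 = r ^ 2 + 2 * inner ℝ (pts i) c - ‖c‖ ^ 2 := fun i => by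
      have := expand (pts i) c
      rw [hnorm i] at this
      linarith
    have hx2 : ‖x - c‖ ^ 2 = ‖x‖ ^ 2 - 2 * inner ℝ x c + ‖c‖ ^ 2 := expand x c
    have step : ∑ i ∈ s, w i * ‖x - pts i‖ ^ 2
        = (‖x‖ ^ 2 + r ^ 2 - ‖c‖ ^ 2) * (∑ i ∈ s, w i)
          - 2 * (∑ i ∈ s, w i * (inner ℝ x (pts i) : ℝ))
          + 2 * (∑ i ∈ s, w i * (inner ℝ (pts i) c : ℝ)) := by
      rw [Finset.mul_sum, Finset.mul_sum, Finset.mul_sum, ← Finset.sum_sub_distrib,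
        ← Finset.sum_add_distrib]
      refine Finset.sum_congr rfl fun i _ => ?_
      rw [expand, hpt i]; ring
    rw [step, hw1, ← hinner, ← hinnerc, hx2, real_inner_self_eq_norm_sq]
    ring
  have hle : ∑ i ∈ s, w i * ‖x - pts i‖ ^ 2 ≤ r ^ 2 := by
    rw [key]; nlinarith [sq_nonneg ‖x - c‖]
  have hex : ∃ i, ‖x - pts i‖ ≤ r := by
    by_contra h
    push_neg at h
    have hsne : s.Nonempty := Finset.nonempty_of_sum_ne_zero (by rw [hw1]; norm_num)
    obtain ⟨i0, hi0, hwi0⟩ : ∃ i ∈ s, 0 < w i := by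
      by_contra hc
      push_neg at hc
      have : ∑ i ∈ s, w i = 0 :=
        le_antisymm (Finset.sum_nonpos hc) (Finset.sum_nonneg hw0)
      rw [hw1] at this; norm_num at this
    have hlt : r ^ 2 < ∑ i ∈ s, w i * ‖x - pts i‖ ^ 2 := by
      have : (∑ i ∈ s, w i * r ^ 2) < ∑ i ∈ s, w i * ‖x - pts i‖ ^ 2 := by
        refine Finset.sum_lt_sum (fun i hi => ?_) ⟨i0, hi0, ?_⟩
        · have : r ^ 2 ≤ ‖x - pts i‖ ^ 2 := by nlinarith [h i, norm_nonneg (x - pts i)]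
          nlinarith [hw0 i hi]
        · have : r ^ 2 < ‖x - pts i0‖ ^ 2 := by nlinarith [h i0, norm_nonneg (x - pts i0)]
          nlinarith
      rwa [← Finset.sum_mul, hw1, one_mul] at this
    linarith
  refine ⟨hex, ?_⟩
  obtain ⟨i, hi⟩ := hex
  calc Metric.infDist x (Set.range pts) ≤ dist x (pts i) :=
        Metric.infDist_le_dist_of_mem (Set.mem_range_self i)
    _ = ‖x - pts i‖ := by rw [dist_eq_norm]
    _ ≤ r := hi
end

section
/- Let d ≥ 1, let S be a finite set of points in ℝ^d, and let T be a Delaunay triangulation of S, i.e., a finite collection of d-dimensional simplices with vertices in S such that no point of S lies strictly inside the circumball of any simplex of T and the convex hulls of the simplices of T cover the convex hull of S. Let τ* ∈ T be a simplex whose circumradius is maximal among all simplices of T, and suppose its circumcenter c* lies in the convex hull of S. Then c* maximizes the distance to the nearest sample vertex over the convex hull of S: dist(c*, S) = sup over x in the convex hull of S of dist(x, S), and this common value equals the circumradius of τ*. -/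
open Finset in
lemma exists_vertex_close {E : Type*} [NormedAddCommGroup E] [InnerProductSpace ℝ E]
    {ι : Type*} (t : Finset ι) (w : ι → ℝ) (p : ι → E)
    (hw0 : ∀ i ∈ t, 0 ≤ w i) (hw1 : ∑ i ∈ t, w i = 1)
    (x c : E) (hx : x = ∑ i ∈ t, w i • p i) (r : ℝ)
    (hr : ∀ i ∈ t, dist (p i) c = r) : ∃ i ∈ t, dist x (p i) ≤ r := by
  have hxc : (∑ i ∈ t, w i • (p i - c)) = x - c := by
    simp [smul_sub, Finset.sum_sub_distrib, ← Finset.sum_smul, hw1, hx]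
  have hinner : ∑ i ∈ t, w i * (inner ℝ (p i - c) (x - c) : ℝ) = ‖x - c‖ ^ 2 := by
    rw [← real_inner_self_eq_norm_sq, ← hxc, sum_inner]
    simp [real_inner_smul_left]
  have hid : ∑ i ∈ t, w i * ‖p i - x‖ ^ 2 = r ^ 2 - ‖x - c‖ ^ 2 := by
    have : ∀ i ∈ t, w i * ‖p i - x‖ ^ 2
        = w i * r ^ 2 - 2 * (w i * (inner ℝ (p i - c) (x - c) : ℝ)) + w i * ‖x - c‖ ^ 2 := by
      intro i hi
      have h1 : p i - x = (p i - c) - (x - c) := by abel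
      have h2 : ‖p i - c‖ = r := by rw [← hr i hi, dist_eq_norm]
      rw [h1, norm_sub_sq_real, h2]; ring
    rw [Finset.sum_congr rfl this, Finset.sum_add_distrib, Finset.sum_sub_distrib,
      ← Finset.mul_sum, ← Finset.sum_mul, hinner, hw1, ← Finset.sum_mul, hw1]
    ring
  by_contra hcon
  push_neg at hcon
  have htne : ∃ i₀ ∈ t, 0 < w i₀ := by
    by_contra h
    push_neg at h
    have : ∑ i ∈ t, w i = 0 := Finset.sum_eq_zero fun i hi => le_antisymm (h i hi) (hw0 i hi)
    simp [this] at hw1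
  obtain ⟨i₀, hi₀, hwi₀⟩ := htne
  have hrnn : 0 ≤ r := by rw [← hr i₀ hi₀]; exact dist_nonneg
  have hlt : ∑ i ∈ t, w i * r ^ 2 < ∑ i ∈ t, w i * ‖p i - x‖ ^ 2 := by
    apply Finset.sum_lt_sum
    · intro i hi
      have : r ≤ ‖x - p i‖ := by
        rw [← dist_eq_norm]; exact (hcon i hi).le
      have : r ^ 2 ≤ ‖x - p i‖ ^ 2 := pow_le_pow_left₀ hrnn this 2
      rw [norm_sub_rev] at this
      exact mul_le_mul_of_nonneg_left this (hw0 i hi)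
    · refine ⟨i₀, hi₀, ?_⟩
      have h1 : r < ‖x - p i₀‖ := by rw [← dist_eq_norm]; exact hcon i₀ hi₀
      have : r ^ 2 < ‖x - p i₀‖ ^ 2 := by
        apply pow_lt_pow_left₀ h1 hrnn; norm_num
      rw [norm_sub_rev] at this
      exact mul_lt_mul_of_pos_left this hwi₀
  rw [← Finset.sum_mul, hw1, one_mul, hid] at hlt
  nlinarith [sq_nonneg ‖x - c‖]


/-- Let `T` be a Delaunay triangulation of a finite set `S ⊆ ℝ^d`, and
let `τ* ∈ T` have maximal circumradius among the simplices of `T`, with circumcenter `c*`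
lying in the convex hull of `S`.  Then `c*` maximizes the distance to the nearest sample
vertex over the convex hull of `S`, and this maximal value equals the circumradius of
`τ*`. -/
theorem max_circumcenter_maximizes_dispersion (d : ℕ) (hd : 1 ≤ d)
    (S : Finset (EuclideanSpace ℝ (Fin d)))
    (T : Set (Affine.Simplex ℝ (EuclideanSpace ℝ (Fin d)) d)) (hTfin : T.Finite)
    (hvert : ∀ τ ∈ T, ∀ i, τ.points i ∈ S)
    (hdelaunay : ∀ τ ∈ T, ∀ s ∈ S, τ.circumradius ≤ dist s τ.circumcenter)
    (hcover : convexHull ℝ (S : Set (EuclideanSpace ℝ (Fin d))) ⊆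
      ⋃ τ ∈ T, convexHull ℝ (Set.range τ.points))
    (τstar : Affine.Simplex ℝ (EuclideanSpace ℝ (Fin d)) d) (hτstar : τstar ∈ T)
    (hmax : ∀ τ ∈ T, τ.circumradius ≤ τstar.circumradius)
    (hcstar : τstar.circumcenter ∈ convexHull ℝ (S : Set (EuclideanSpace ℝ (Fin d)))) :
    Metric.infDist τstar.circumcenter (S : Set (EuclideanSpace ℝ (Fin d)))
        = τstar.circumradius ∧
      ∀ x ∈ convexHull ℝ (S : Set (EuclideanSpace ℝ (Fin d))),
        Metric.infDist x (S : Set (EuclideanSpace ℝ (Fin d))) ≤ τstar.circumradius := by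
  have hSne : (S : Set (EuclideanSpace ℝ (Fin d))).Nonempty :=
    ⟨τstar.points 0, hvert τstar hτstar 0⟩
  constructor
  · apply le_antisymm
    · calc Metric.infDist τstar.circumcenter (S : Set (EuclideanSpace ℝ (Fin d)))
          ≤ dist τstar.circumcenter (τstar.points 0) :=
            Metric.infDist_le_dist_of_mem (hvert τstar hτstar 0)
        _ = τstar.circumradius := by
            rw [dist_comm]; exact τstar.dist_circumcenter_eq_circumradius 0
    · by_contra h
      push_neg at h
      obtain ⟨y, hy, hlt⟩ := (Metric.infDist_lt_iff hSne).mp h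
      rw [dist_comm] at hlt
      exact absurd (hdelaunay τstar hτstar y hy) (not_le.mpr hlt)
  · intro x hx
    obtain ⟨τ, hτT, hxτ⟩ := by simpa only [Set.mem_iUnion, exists_prop] using hcover hx
    rw [convexHull_range_eq_exists_affineCombination] at hxτ
    obtain ⟨t, w, hw0, hw1, hxeq⟩ := hxτ
    rw [Finset.affineCombination_eq_linear_combination _ _ _ hw1] at hxeq
    obtain ⟨i, hit, hdi⟩ := exists_vertex_close t w τ.points hw0 hw1 x
      τ.circumcenter hxeq.symm τ.circumradius
      (fun i _ => τ.dist_circumcenter_eq_circumradius i)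
    calc Metric.infDist x (S : Set (EuclideanSpace ℝ (Fin d)))
        ≤ dist x (τ.points i) := Metric.infDist_le_dist_of_mem (hvert τ hτT i)
      _ ≤ τ.circumradius := hdi
      _ ≤ τstar.circumradius := hmax τ hτT
end

section
/- Let d ≥ 1 and let S be a finite set of points in ℝ^d in general position (no d+2 points of S lie on a common sphere). Let τ and τ' be two d-dimensional simplices, each with its d+1 affinely independent vertices belonging to S, such that no point of S lies strictly inside the circumball of τ and no point of S lies strictly inside the circumball of τ'. Then either τ and τ' have the same vertex set, or the interiors of their convex hulls are disjoint. (Together with existence, this expresses uniqueness of the Delaunay triangulation of a point set in general position.) -/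
/-- For a finite set `S ⊆ ℝ^d` in general position (no `d+2` points of
`S` on a common sphere), any two Delaunay simplices of `S` either have the same vertex
set or the interiors of their convex hulls are disjoint (uniqueness of the Delaunay
triangulation). -/
theorem delaunay_simplices_unique (d : ℕ) (hd : 1 ≤ d)
    (S : Finset (EuclideanSpace ℝ (Fin d)))
    (hgen : ∀ (c : EuclideanSpace ℝ (Fin d)) (r : ℝ),
      ({s : EuclideanSpace ℝ (Fin d) | s ∈ S ∧ dist s c = r}).ncard ≤ d + 1)
    (τ τ' : Affine.Simplex ℝ (EuclideanSpace ℝ (Fin d)) d)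
    (hvert : ∀ i, τ.points i ∈ S) (hvert' : ∀ i, τ'.points i ∈ S)
    (hdel : ∀ s ∈ S, τ.circumradius ≤ dist s τ.circumcenter)
    (hdel' : ∀ s ∈ S, τ'.circumradius ≤ dist s τ'.circumcenter) :
    Set.range τ.points = Set.range τ'.points ∨
      interior (convexHull ℝ (Set.range τ.points)) ∩
        interior (convexHull ℝ (Set.range τ'.points)) = ∅ := by
  classical
  by_cases hE : interior (convexHull ℝ (Set.range τ.points)) ∩
      interior (convexHull ℝ (Set.range τ'.points)) = ∅
  · exact Or.inr hE
  left
  set c : EuclideanSpace ℝ (Fin d) := τ.circumcenter with hc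
  set c' : EuclideanSpace ℝ (Fin d) := τ'.circumcenter with hc'
  set r : ℝ := τ.circumradius with hrdef
  set r' : ℝ := τ'.circumradius with hr'def
  have hr : 0 ≤ r := by
    rw [hrdef, ← τ.dist_circumcenter_eq_circumradius 0]; exact dist_nonneg
  have hr' : 0 ≤ r' := by
    rw [hr'def, ← τ'.dist_circumcenter_eq_circumradius 0]; exact dist_nonneg
  set g : EuclideanSpace ℝ (Fin d) → ℝ := fun y => 2 * inner ℝ y (c' - c) with hg
  set K : ℝ := ‖c‖ ^ 2 - ‖c'‖ ^ 2 - r ^ 2 + r' ^ 2 with hK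
  have key : ∀ y : EuclideanSpace ℝ (Fin d), (dist y c) ^ 2 - r ^ 2 - ((dist y c') ^ 2 - r' ^ 2) = g y + K := by
    intro y
    simp only [hg, hK, dist_eq_norm, norm_sub_sq_real, inner_sub_right]
    ring
  have hlin : IsLinearMap ℝ g := by
    constructor
    · intro x y; simp only [hg, inner_add_left]; ring
    · intro a x; simp only [hg, real_inner_smul_left, smul_eq_mul]; ring
  have hT1 : convexHull ℝ (Set.range τ.points) ⊆ {y : EuclideanSpace ℝ (Fin d) | g y ≤ -K} := by
    apply convexHull_min
    · rintro _ ⟨i, rfl⟩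
      have h1 : dist (τ.points i) c = r := τ.dist_circumcenter_eq_circumradius i
      have h2 : r' ≤ dist (τ.points i) c' := hdel' _ (hvert i)
      have h3 : r' ^ 2 ≤ (dist (τ.points i) c') ^ 2 := pow_le_pow_left₀ hr' h2 2
      have h4 := key (τ.points i)
      rw [h1] at h4
      simp only [Set.mem_setOf_eq]
      linarith
    · exact convex_halfSpace_le hlin (-K)
  have hT2 : convexHull ℝ (Set.range τ'.points) ⊆ {y : EuclideanSpace ℝ (Fin d) | -K ≤ g y} := by
    apply convexHull_min
    · rintro _ ⟨i, rfl⟩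
      have h1 : dist (τ'.points i) c' = r' := τ'.dist_circumcenter_eq_circumradius i
      have h2 : r ≤ dist (τ'.points i) c := hdel _ (hvert' i)
      have h3 : r ^ 2 ≤ (dist (τ'.points i) c) ^ 2 := pow_le_pow_left₀ hr h2 2
      have h4 := key (τ'.points i)
      rw [h1] at h4
      simp only [Set.mem_setOf_eq]
      linarith
    · exact convex_halfSpace_ge hlin (-K)
  set U := interior (convexHull ℝ (Set.range τ.points)) ∩
      interior (convexHull ℝ (Set.range τ'.points)) with hU
  have hUopen : IsOpen U := isOpen_interior.inter isOpen_interior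
  have hUval : ∀ y ∈ U, g y = -K := by
    rintro y ⟨hy1, hy2⟩
    have a1 := hT1 (interior_subset hy1)
    have a2 := hT2 (interior_subset hy2)
    simp only [Set.mem_setOf_eq] at a1 a2
    linarith
  obtain ⟨x, hx⟩ := Set.nonempty_iff_ne_empty.2 hE
  obtain ⟨ε, hε, hball⟩ := Metric.isOpen_iff.1 hUopen x hx
  have hgzero : ∀ v : EuclideanSpace ℝ (Fin d), g v = 0 := by
    intro v
    set t : ℝ := ε / (2 * (‖v‖ + 1)) with ht
    have htpos : 0 < t := by positivity
    have hmem : x + t • v ∈ U := by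
      apply hball
      rw [Metric.mem_ball, dist_eq_norm, add_sub_cancel_left, norm_smul,
        Real.norm_eq_abs, abs_of_pos htpos]
      have h1 : t * (2 * (‖v‖ + 1)) = ε := by
        rw [ht]; field_simp
      nlinarith [norm_nonneg v]
    have e1 := hUval _ hmem
    have e2 := hUval x hx
    have e3 : g (x + t • v) = g x + t * g v := by
      rw [hlin.map_add, hlin.map_smul]; simp
    have : t * g v = 0 := by linarith [e3 ▸ e1]
    rcases mul_eq_zero.1 this with h | h
    · exact absurd h (ne_of_gt htpos)
    · exact h
  have hKzero : K = 0 := by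
    have := hUval x hx
    rw [hgzero x] at this
    linarith
  -- Every vertex of both simplices lies on the circumsphere of τ'.
  have hsphere : ∀ y : EuclideanSpace ℝ (Fin d), (dist y c) ^ 2 - r ^ 2 = (dist y c') ^ 2 - r' ^ 2 := by
    intro y
    have := key y
    rw [hgzero y, hKzero] at this
    linarith
  set F : Set (EuclideanSpace ℝ (Fin d)) := {s : EuclideanSpace ℝ (Fin d) | s ∈ S ∧ dist s c' = r'} with hF
  have hFfin : F.Finite := S.finite_toSet.subset fun s hs => hs.1
  have hFcard : F.ncard ≤ d + 1 := hgen c' r'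
  have hsub1 : Set.range τ.points ⊆ F := by
    rintro _ ⟨i, rfl⟩
    refine ⟨hvert i, ?_⟩
    have h1 : dist (τ.points i) c = r := τ.dist_circumcenter_eq_circumradius i
    have h2 := hsphere (τ.points i)
    rw [h1] at h2
    have h3 : (dist (τ.points i) c') ^ 2 = r' ^ 2 := by linarith
    calc dist (τ.points i) c' = Real.sqrt ((dist (τ.points i) c') ^ 2) :=
          (Real.sqrt_sq dist_nonneg).symm
      _ = Real.sqrt (r' ^ 2) := by rw [h3]
      _ = r' := Real.sqrt_sq hr'
  have hsub2 : Set.range τ'.points ⊆ F := by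
    rintro _ ⟨i, rfl⟩
    exact ⟨hvert' i, τ'.dist_circumcenter_eq_circumradius i⟩
  have hcard1 : (Set.range τ.points).ncard = d + 1 := by
    rw [← Nat.card_coe_set_eq, Nat.card_range_of_injective τ.independent.injective,
      Nat.card_eq_fintype_card, Fintype.card_fin]
  have hcard2 : (Set.range τ'.points).ncard = d + 1 := by
    rw [← Nat.card_coe_set_eq, Nat.card_range_of_injective τ'.independent.injective,
      Nat.card_eq_fintype_card, Fintype.card_fin]
  have heq1 : Set.range τ.points = F :=
    Set.eq_of_subset_of_ncard_le hsub1 (by rw [hcard1]; exact hFcard) hFfin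
  have heq2 : Set.range τ'.points = F :=
    Set.eq_of_subset_of_ncard_le hsub2 (by rw [hcard2]; exact hFcard) hFfin
  rw [heq1, heq2]
end

section
/- Let d ≥ 1 and let S be a finite set of points in ℝ^d whose affine span is all of ℝ^d. Then for every point x of the convex hull of S there exists a d-dimensional simplex τ with its d+1 affinely independent vertices belonging to S such that x lies in the convex hull of the vertices of τ and no point of S lies strictly inside the circumball of τ (dist(s, circumcenter(τ)) ≥ circumradius(τ) for all s ∈ S). (This expresses the existence of a Delaunay triangulation covering the convex hull of S.) -/
open Finset

local notation "E" d => EuclideanSpace ℝ (Fin d)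

-- Step 1: existence of a minimizer of the lifted objective
lemma exists_min_weights (d : ℕ) (S : Finset (E d)) (x : E d)
    (hx : x ∈ convexHull ℝ (S : Set (E d))) :
    ∃ v : (E d) → ℝ, ((∀ y ∈ S, 0 ≤ v y) ∧ (∑ y ∈ S, v y = 1) ∧ (∑ y ∈ S, v y • y = x)
      ∧ ∀ y, y ∉ S → v y = 0) ∧
      ∀ v' : (E d) → ℝ, (∀ y ∈ S, 0 ≤ v' y) → (∑ y ∈ S, v' y = 1) → (∑ y ∈ S, v' y • y = x) →
        ∑ y ∈ S, v y * ‖y‖^2 ≤ ∑ y ∈ S, v' y * ‖y‖^2 := by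
  classical
  set K : Set (↥S → ℝ) :=
    {w | (∀ i, 0 ≤ w i) ∧ (∑ i, w i = 1) ∧ (∑ i, w i • (i : E d) = x)} with hK
  have hKne : K.Nonempty := by
    obtain ⟨w, hw0, hw1, hwx⟩ := Finset.mem_convexHull'.mp hx
    refine ⟨fun i => w i, fun i => hw0 _ i.2, ?_, ?_⟩
    · rw [Finset.sum_coe_sort S w]; exact hw1
    · rw [Finset.sum_coe_sort S (fun y => w y • y)]; exact hwx
  have hKc : IsCompact K := by
    have hsub : K ⊆ Set.pi Set.univ (fun _ : ↥S => Set.Icc (0:ℝ) 1) := by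
      rintro w ⟨h0, h1, -⟩ i -
      refine ⟨h0 i, ?_⟩
      calc w i ≤ ∑ j, w j := Finset.single_le_sum (fun j _ => h0 j) (mem_univ i)
      _ = 1 := h1
    refine IsCompact.of_isClosed_subset (isCompact_univ_pi fun _ => isCompact_Icc) ?_ hsub
    have : K = (⋂ i, {w : ↥S → ℝ | 0 ≤ w i}) ∩
        ({w : ↥S → ℝ | ∑ i, w i = 1} ∩ {w : ↥S → ℝ | ∑ i, w i • (i : E d) = x}) := by
      ext w; simp [hK, Set.mem_iInter, and_assoc]
    rw [this]
    refine ((isClosed_iInter fun i => isClosed_le continuous_const (continuous_apply i))).inter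
      (IsClosed.inter ?_ ?_)
    · exact isClosed_eq (continuous_finset_sum _ fun i _ => continuous_apply i) continuous_const
    · exact isClosed_eq (continuous_finset_sum _ fun i _ =>
        (continuous_apply i).smul continuous_const) continuous_const
  have hf : Continuous fun w : ↥S → ℝ => ∑ i, w i * ‖(i : E d)‖^2 :=
    continuous_finset_sum _ fun i _ => (continuous_apply i).mul continuous_const
  obtain ⟨w, hwK, hwmin⟩ := hKc.exists_isMinOn hKne hf.continuousOn
  set u : (E d) → ℝ := fun y => if h : y ∈ S then w ⟨y, h⟩ else 0 with hu_def
  have hu : ∀ i : ↥S, u ↑i = w i := fun i => by simp [hu_def]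
  have hsum : ∀ g : (E d) → ℝ → ℝ, (∀ y, g y 0 = 0) → True → True →
      ∑ y ∈ S, g y (u y) = ∑ i : ↥S, g ↑i (w i) := by
    intro g hg _ _
    rw [← Finset.sum_coe_sort S (fun y => g y (u y))]
    exact Finset.sum_congr rfl fun i _ => by rw [hu i]
  refine ⟨u, ⟨?_, ?_, ?_, ?_⟩, ?_⟩
  · intro y hy; simp only [hu_def]; rw [dif_pos hy]; exact hwK.1 _
  · rw [← Finset.sum_coe_sort S u, Finset.sum_congr rfl fun i _ => hu i]; exact hwK.2.1
  · rw [← Finset.sum_coe_sort S (fun y => u y • y),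
      Finset.sum_congr rfl (fun i _ => by rw [hu i])]
    exact hwK.2.2
  · intro y hy; simp only [hu_def]; rw [dif_neg hy]
  · intro v' h0 h1 hvx
    have hmem : (fun i : ↥S => v' i) ∈ K := by
      refine ⟨fun i => h0 _ i.2, ?_, ?_⟩
      · rw [Finset.sum_coe_sort S v']; exact h1
      · rw [Finset.sum_coe_sort S (fun y => v' y • y)]; exact hvx
    have hle := hwmin hmem
    simp only [Set.mem_setOf_eq] at hle
    calc ∑ y ∈ S, u y * ‖y‖^2
        = ∑ i : ↥S, w i * ‖(i : E d)‖^2 := by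
          rw [← Finset.sum_coe_sort S (fun y => u y * ‖y‖^2)]
          exact Finset.sum_congr rfl fun i _ => by rw [hu i]
    _ ≤ ∑ i : ↥S, v' i * ‖(i : E d)‖^2 := hle
    _ = ∑ y ∈ S, v' y * ‖y‖^2 := Finset.sum_coe_sort S (fun y => v' y * ‖y‖^2)

lemma exists_small_t {α : Type*} [DecidableEq α] (Y : Finset α) (hY : Y.Nonempty)
    (w g : α → ℝ) (hw : ∀ y ∈ Y, 0 < w y) :
    ∃ t : ℝ, 0 < t ∧ ∀ y ∈ Y, t * |g y| ≤ w y := by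
  set f : α → ℝ := fun y => w y / (|g y| + 1) with hf
  have hne : (Y.image f).Nonempty := hY.image f
  refine ⟨(Y.image f).min' hne, ?_, ?_⟩
  · obtain ⟨y, hy, hEq⟩ := Finset.mem_image.mp ((Y.image f).min'_mem hne)
    rw [← hEq]
    have := hw y hy
    simp only [hf]
    positivity
  · intro y hy
    have h1 : (Y.image f).min' hne ≤ w y / (|g y| + 1) :=
      Finset.min'_le _ _ (Finset.mem_image_of_mem f hy)
    have h2 : (0:ℝ) < |g y| + 1 := by positivity
    have h3 := mul_le_mul_of_nonneg_right h1 (abs_nonneg (g y))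
    have h4 : w y / (|g y| + 1) * (|g y| + 1) = w y := div_mul_cancel₀ _ (ne_of_gt h2)
    nlinarith [abs_nonneg (g y), (hw y hy).le, div_nonneg (hw y hy).le h2.le]

set_option maxHeartbeats 1000000 in
lemma delaunay_generic (d : ℕ) (S : Finset (E d)) (x : E d)
    (hx : x ∈ convexHull ℝ (S : Set (E d)))
    (hgen : ∀ t : Finset (E d), t ⊆ S → t.card ≤ d → x ∉ affineSpan ℝ (t : Set (E d))) :
    ∃ τ : Affine.Simplex ℝ (EuclideanSpace ℝ (Fin d)) d,
      (∀ i, τ.points i ∈ S) ∧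
      x ∈ convexHull ℝ (Set.range τ.points) ∧
      ∀ s ∈ S, τ.circumradius ≤ dist s τ.circumcenter := by
  classical
  obtain ⟨v, ⟨hv0, hv1, hvx, hvout⟩, hvmin⟩ := exists_min_weights d S x hx
  set m : ℝ := ∑ y ∈ S, v y * ‖y‖^2 with hm
  set Feas : ((E d) → ℝ) → Prop := fun v' =>
    (∀ y ∈ S, 0 ≤ v' y) ∧ (∑ y ∈ S, v' y = 1) ∧ (∑ y ∈ S, v' y • y = x) ∧
    (∀ y, y ∉ S → v' y = 0) with hFeas
  set P : ℕ → Prop := fun n =>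
    ∃ v', Feas v' ∧ (∑ y ∈ S, v' y * ‖y‖^2) = m ∧ (S.filter (fun y => v' y ≠ 0)).card ≤ n
    with hP
  have hPtop : P S.card := ⟨v, ⟨hv0, hv1, hvx, hvout⟩, rfl, Finset.card_filter_le _ _⟩
  have hPex : ∃ n, P n := ⟨S.card, hPtop⟩
  set n₀ := Nat.find hPex with hn₀
  obtain ⟨w, hwF, hwm, hwcard⟩ := Nat.find_spec hPex
  set Y : Finset (E d) := S.filter (fun y => w y ≠ 0) with hY
  have hYS : Y ⊆ S := Finset.filter_subset _ _
  have hYpos : ∀ y ∈ Y, 0 < w y := by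
    intro y hy
    rcases Finset.mem_filter.mp hy with ⟨hyS, hyne⟩
    exact lt_of_le_of_ne (hwF.1 y hyS) (Ne.symm hyne)
  have hw_outY : ∀ y, y ∉ Y → w y = 0 := by
    intro y hy
    by_cases hyS : y ∈ S
    · by_contra hne
      exact hy (Finset.mem_filter.mpr ⟨hyS, hne⟩)
    · exact hwF.2.2.2 y hyS
  -- sums over S restrict to Y
  have hsum_Y : ∀ g : (E d) → ℝ, (∀ y, w y = 0 → g y = 0) → ∑ y ∈ S, g y = ∑ y ∈ Y, g y := by
    intro g hg
    exact (Finset.sum_subset hYS (fun y _ hy => hg y (hw_outY y hy))).symm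
  have hsum_Yv : ∀ g : (E d) → (E d), (∀ y, w y = 0 → g y = 0) →
      ∑ y ∈ S, g y = ∑ y ∈ Y, g y := by
    intro g hg
    exact (Finset.sum_subset hYS (fun y _ hy => hg y (hw_outY y hy))).symm
  -- Claim A : affine independence of Y
  have hindep : AffineIndependent ℝ (fun p : ↥Y => (p : E d)) := by
    rw [affineIndependent_iff_of_fintype]
    by_contra hcon
    push_neg at hcon
    obtain ⟨η, hη0, hηv, i₀, hi₀⟩ := hcon
    have hηlin : ∑ k : ↥Y, η k • (k : E d) = 0 := by
      rwa [Finset.weightedVSub_eq_linear_combination _ hη0] at hηv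
    set α : (E d) → ℝ := fun y => if h : y ∈ Y then η ⟨y, h⟩ else 0 with hα_def
    have hα : ∀ k : ↥Y, α ↑k = η k := fun k => by simp [hα_def]
    have hα_supp : ∀ y, α y ≠ 0 → y ∈ Y := by
      intro y hy
      by_contra h
      exact hy (dif_neg h)
    have hα_zero : ∀ y, w y = 0 → α y = 0 := by
      intro y hwy
      by_contra h
      exact (Finset.mem_filter.mp (hα_supp y h)).2 hwy
    have hαsum : ∑ y ∈ S, α y = 0 := by
      rw [hsum_Y α hα_zero, ← Finset.sum_coe_sort Y α,
        Finset.sum_congr rfl (fun k _ => hα k)]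
      exact hη0
    have hαvec : ∑ y ∈ S, α y • y = 0 := by
      rw [hsum_Yv (fun y => α y • y) (fun y h => by show α y • y = 0; rw [hα_zero y h, zero_smul]),
        ← Finset.sum_coe_sort Y (fun y => α y • y),
        Finset.sum_congr rfl (fun k _ => by rw [hα k])]
      exact hηlin
    have hYne : Y.Nonempty := ⟨↑i₀, i₀.2⟩
    set c₀ : ℝ := ∑ y ∈ S, α y * ‖y‖^2 with hc₀def
    by_cases hc₀ : c₀ = 0
    · -- slide to reduce support
      have hex_neg : ∃ y ∈ Y, α y < 0 := by
        by_contra h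
        push_neg at h
        have hY0 : ∑ y ∈ Y, α y = 0 := by rw [← hsum_Y α hα_zero]; exact hαsum
        have := (Finset.sum_eq_zero_iff_of_nonneg h).mp hY0 ↑i₀ i₀.2
        rw [hα i₀] at this
        exact hi₀ this
      set N : Finset (E d) := Y.filter (fun y => α y < 0) with hN
      have hNne : N.Nonempty := by
        obtain ⟨y, hy, hy'⟩ := hex_neg
        exact ⟨y, Finset.mem_filter.mpr ⟨hy, hy'⟩⟩
      set f : (E d) → ℝ := fun y => w y / (-α y) with hf
      have hfimne : (N.image f).Nonempty := hNne.image f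
      set t : ℝ := (N.image f).min' hfimne with htdef
      obtain ⟨yd, hydN, hyd⟩ := Finset.mem_image.mp ((N.image f).min'_mem hfimne)
      have hydY : yd ∈ Y := (Finset.mem_filter.mp hydN).1
      have hydneg : α yd < 0 := (Finset.mem_filter.mp hydN).2
      have htpos : 0 < t := by
        rw [htdef, ← hyd, hf]
        exact div_pos (hYpos yd hydY) (by linarith)
      have htle : ∀ y ∈ N, t ≤ w y / (-α y) := fun y hy =>
        Finset.min'_le _ _ (Finset.mem_image_of_mem f hy)
      set v' : (E d) → ℝ := fun y => w y + t * α y with hv'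
      have hv'0 : ∀ y ∈ S, 0 ≤ v' y := by
        intro y hyS
        rcases lt_or_ge (α y) 0 with hneg | hpos
        · have hyN : y ∈ N := Finset.mem_filter.mpr
            ⟨hα_supp y (ne_of_lt hneg), hneg⟩
          have := htle y hyN
          rw [le_div_iff₀ (by linarith : (0:ℝ) < -α y)] at this
          simp only [hv']
          nlinarith
        · have := hwF.1 y hyS
          simp only [hv']
          nlinarith
      have hv'1 : ∑ y ∈ S, v' y = 1 := by
        simp only [hv', Finset.sum_add_distrib, ← Finset.mul_sum, hαsum, hwF.2.1]
        ring
      have hv'x : ∑ y ∈ S, v' y • y = x := by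
        simp only [hv', add_smul, mul_smul, Finset.sum_add_distrib, ← Finset.smul_sum, hαvec,
          hwF.2.2.1, smul_zero, add_zero]
      have hv'out : ∀ y, y ∉ S → v' y = 0 := by
        intro y hy
        simp only [hv', hwF.2.2.2 y hy, hα_def, dif_neg (fun hyY => hy (hYS hyY))]
        ring
      have hv'm : ∑ y ∈ S, v' y * ‖y‖^2 = m := by
        simp only [hv', add_mul, Finset.sum_add_distrib, hwm, mul_assoc, ← Finset.mul_sum,
          ← hc₀def, hc₀]
        ring
      have hv'yd : v' yd = 0 := by
        have hα0 : α yd ≠ 0 := ne_of_lt hydneg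
        have htv : t = w yd / (-α yd) := htdef.trans hyd.symm
        show w yd + t * α yd = 0
        rw [htv, div_neg, neg_mul, div_mul_cancel₀ _ hα0]
        ring
      have hsupp : S.filter (fun y => v' y ≠ 0) ⊆ Y.erase yd := by
        intro y hy
        rcases Finset.mem_filter.mp hy with ⟨hyS, hyne⟩
        refine Finset.mem_erase.mpr ⟨?_, ?_⟩
        · rintro rfl; exact hyne hv'yd
        · by_contra hyY
          exact hyne (by simp only [hv', hw_outY y hyY,
            hα_def, dif_neg hyY, mul_zero, add_zero])
      have hcard' : (S.filter (fun y => v' y ≠ 0)).card ≤ Y.card - 1 := by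
        have := Finset.card_le_card hsupp
        rwa [Finset.card_erase_of_mem hydY] at this
      have hYge1 : 1 ≤ Y.card := Finset.card_pos.mpr hYne
      have hfind := Nat.find_min hPex (m := n₀ - 1) (by omega)
      exact hfind ⟨v', ⟨hv'0, hv'1, hv'x, hv'out⟩, hv'm, by omega⟩
    · -- strictly improving direction
      set s₀ : ℝ := if 0 < c₀ then (-1:ℝ) else 1 with hs₀
      set β : (E d) → ℝ := fun y => s₀ * α y with hβ
      have hβneg : ∑ y ∈ S, β y * ‖y‖^2 < 0 := by
        have : ∑ y ∈ S, β y * ‖y‖^2 = s₀ * c₀ := by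
          rw [hc₀def, Finset.mul_sum]
          exact Finset.sum_congr rfl fun y _ => by rw [hβ]; ring
        rw [this, hs₀]
        rcases lt_trichotomy c₀ 0 with h | h | h
        · rw [if_neg (by linarith)]; linarith
        · exact absurd h hc₀
        · rw [if_pos h]; linarith
      obtain ⟨t, htpos, htle⟩ := exists_small_t Y hYne w β hYpos
      set v' : (E d) → ℝ := fun y => w y + t * β y with hv'
      have hβ_zero : ∀ y, w y = 0 → β y = 0 := fun y h => by
        show s₀ * α y = 0
        rw [hα_zero y h, mul_zero]
      have hβsum : ∑ y ∈ S, β y = 0 := by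
        simp only [hβ, ← Finset.mul_sum, hαsum, mul_zero]
      have hβvec : ∑ y ∈ S, β y • y = 0 := by
        simp only [hβ, mul_smul, ← Finset.smul_sum, hαvec, smul_zero]
      have hv'0 : ∀ y ∈ S, 0 ≤ v' y := by
        intro y hyS
        by_cases hyY : y ∈ Y
        · have h1 := htle y hyY
          have h2 : -(t * |β y|) ≤ t * β y := by
            have := neg_abs_le (β y)
            nlinarith
          simp only [hv']
          linarith
        · simp only [hv', hβ_zero y (hw_outY y hyY), mul_zero, add_zero]
          exact hwF.1 y hyS
      have hv'1 : ∑ y ∈ S, v' y = 1 := by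
        simp only [hv', Finset.sum_add_distrib, ← Finset.mul_sum, hβsum, hwF.2.1]
        ring
      have hv'x : ∑ y ∈ S, v' y • y = x := by
        simp only [hv', add_smul, mul_smul, Finset.sum_add_distrib, ← Finset.smul_sum, hβvec,
          hwF.2.2.1, smul_zero, add_zero]
      have hobj : ∑ y ∈ S, v' y * ‖y‖^2 < m := by
        have : ∑ y ∈ S, v' y * ‖y‖^2
            = m + t * ∑ y ∈ S, β y * ‖y‖^2 := by
          simp only [hv', add_mul, Finset.sum_add_distrib, hwm, mul_assoc, ← Finset.mul_sum]
        rw [this]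
        nlinarith
      have := hvmin v' hv'0 hv'1 hv'x
      linarith
  -- Claim C : card Y = d + 1
  have hxY : x ∈ convexHull ℝ (Y : Set (E d)) := by
    refine Finset.mem_convexHull'.mpr ⟨w, fun y hy => hwF.1 y (hYS hy), ?_, ?_⟩
    · rw [← hsum_Y w (fun y h => h)]; exact hwF.2.1
    · rw [← hsum_Yv (fun y => w y • y) (fun y h => by simp [h])]; exact hwF.2.2.1
  have hYcard : Y.card = d + 1 := by
    have hle : Fintype.card ↥Y ≤
        Module.finrank ℝ (vectorSpan ℝ (Set.range (fun p : ↥Y => (p : E d)))) + 1 :=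
      hindep.card_le_finrank_succ
    have h2 : Module.finrank ℝ (vectorSpan ℝ (Set.range (fun p : ↥Y => (p : E d)))) ≤ d := by
      refine le_trans (Submodule.finrank_le _) ?_
      simp [finrank_euclideanSpace_fin]
    rw [Fintype.card_coe] at hle
    have hge : ¬ (Y.card ≤ d) := fun h =>
      hgen Y hYS h (convexHull_subset_affineSpan (Y : Set (E d)) hxY)
    omega
  -- Claim D : the simplex
  set e : ↥Y ≃ Fin (d + 1) := Y.equivFinOfCardEq hYcard with he
  set τ : Affine.Simplex ℝ (EuclideanSpace ℝ (Fin d)) d :=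
    ⟨fun i => ((e.symm i : ↥Y) : E d), hindep.comp_embedding e.symm.toEmbedding⟩ with hτ
  have hrange : Set.range τ.points = (Y : Set (E d)) := by
    ext y
    constructor
    · rintro ⟨i, rfl⟩; exact (e.symm i).2
    · intro hy; exact ⟨e ⟨y, hy⟩, by simp [hτ]⟩
  refine ⟨τ, fun i => hYS (e.symm i).2, by rw [hrange]; exact hxY, ?_⟩
  -- Claim E : Delaunay
  intro s hs
  by_contra hlt
  push_neg at hlt
  set cc := τ.circumcenter with hcdef
  set r := τ.circumradius with hrdef
  have hr0 : 0 ≤ r := by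
    rw [hrdef, ← τ.dist_circumcenter_eq_circumradius 0]
    exact dist_nonneg
  have hspan_top : affineSpan ℝ (Set.range τ.points) = ⊤ := by
    rw [τ.independent.affineSpan_eq_top_iff_card_eq_finrank_add_one]
    simp [finrank_euclideanSpace_fin]
  have hsmem : s ∈ affineSpan ℝ (Set.range τ.points) := by rw [hspan_top]; trivial
  obtain ⟨θ, hθ1, hθs⟩ := eq_affineCombination_of_mem_affineSpan_of_fintype hsmem
  have hcomb : s = ∑ i, θ i • τ.points i := by
    rw [hθs, Finset.affineCombination_eq_linear_combination _ _ _ hθ1]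
  have hpt : ∀ i, ‖τ.points i‖^2 = r^2 + 2 * (inner ℝ (τ.points i) cc : ℝ) - ‖cc‖^2 := by
    intro i
    have h1 : dist (τ.points i) cc = r := τ.dist_circumcenter_eq_circumradius i
    have h2 : ‖τ.points i - cc‖^2
        = ‖τ.points i‖^2 - 2 * (inner ℝ (τ.points i) cc : ℝ) + ‖cc‖^2 :=
      norm_sub_sq_real _ _
    rw [dist_eq_norm] at h1
    have h3 : ‖τ.points i - cc‖^2 = r^2 := by rw [h1]
    linarith
  have hinner : (inner ℝ s cc : ℝ) = ∑ i, θ i * (inner ℝ (τ.points i) cc : ℝ) := by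
    rw [hcomb, sum_inner]
    exact Finset.sum_congr rfl fun i _ => real_inner_smul_left _ _ _
  have hc₁ : ∑ i, θ i * ‖τ.points i‖^2 = r^2 + 2 * (inner ℝ s cc : ℝ) - ‖cc‖^2 := by
    calc ∑ i, θ i * ‖τ.points i‖^2
        = ∑ i, (θ i * (r^2 - ‖cc‖^2) + 2 * (θ i * (inner ℝ (τ.points i) cc : ℝ))) :=
          Finset.sum_congr rfl fun i _ => by rw [hpt i]; ring
      _ = (∑ i, θ i) * (r^2 - ‖cc‖^2) + 2 * ∑ i, θ i * (inner ℝ (τ.points i) cc : ℝ) := by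
          rw [Finset.sum_add_distrib, ← Finset.sum_mul, ← Finset.mul_sum]
      _ = r^2 + 2 * (inner ℝ s cc : ℝ) - ‖cc‖^2 := by rw [hθ1, hinner]; ring
  have hkey : ‖s‖^2 - ∑ i, θ i * ‖τ.points i‖^2 < 0 := by
    have h2 : ‖s - cc‖^2 = ‖s‖^2 - 2 * (inner ℝ s cc : ℝ) + ‖cc‖^2 := norm_sub_sq_real _ _
    have h3 : ‖s - cc‖^2 < r^2 := by
      rw [← dist_eq_norm]
      exact pow_lt_pow_left₀ hlt dist_nonneg (by norm_num)
    rw [hc₁]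
    linarith
  -- transport the weights to E
  set γ : (E d) → ℝ := fun y => if h : y ∈ Y then θ (e ⟨y, h⟩) else 0 with hγdef
  have hγk : ∀ k : ↥Y, γ ↑k = θ (e k) := fun k => by simp [hγdef]
  have hγ_zero : ∀ y, w y = 0 → γ y = 0 := by
    intro y hwy
    have hyY : y ∉ Y := fun hy => (Finset.mem_filter.mp hy).2 hwy
    exact dif_neg hyY
  have hγ1 : ∑ y ∈ S, γ y = 1 := by
    rw [hsum_Y γ hγ_zero, ← Finset.sum_coe_sort Y γ,
      Finset.sum_congr rfl (fun k _ => hγk k), Equiv.sum_comp e θ]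
    exact hθ1
  have hγx : ∑ y ∈ S, γ y • y = s := by
    rw [hsum_Yv (fun y => γ y • y)
        (fun y h => by show γ y • y = 0; rw [hγ_zero y h, zero_smul]),
      ← Finset.sum_coe_sort Y (fun y => γ y • y),
      Finset.sum_congr rfl (fun k _ => by rw [hγk k])]
    rw [hcomb]
    exact Fintype.sum_equiv e _ _ (fun k => by simp [hτ])
  have hγobj : ∑ y ∈ S, γ y * ‖y‖^2 = ∑ i, θ i * ‖τ.points i‖^2 := by
    rw [hsum_Y (fun y => γ y * ‖y‖^2)
        (fun y h => by show γ y * ‖y‖^2 = 0; rw [hγ_zero y h, zero_mul]),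
      ← Finset.sum_coe_sort Y (fun y => γ y * ‖y‖^2),
      Finset.sum_congr rfl (fun k _ => by rw [hγk k])]
    exact Fintype.sum_equiv e _ _ (fun k => by simp [hτ])
  have hYne : Y.Nonempty := Finset.card_pos.mp (by omega)
  obtain ⟨t, htpos, htle⟩ := exists_small_t Y hYne w γ hYpos
  set v' : (E d) → ℝ := fun y => w y + t * ((if y = s then (1:ℝ) else 0) - γ y) with hv'
  have hind1 : ∑ y ∈ S, (if y = s then (1:ℝ) else 0) = 1 := by
    rw [Finset.sum_ite_eq' S s (fun _ => (1:ℝ))]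
    exact if_pos hs
  have hindx : ∑ y ∈ S, (if y = s then (1:ℝ) else 0) • y = s := by
    have : ∀ y ∈ S, (if y = s then (1:ℝ) else 0) • y = if y = s then y else 0 := by
      intro y _
      split_ifs with h
      · rw [one_smul]
      · rw [zero_smul]
    rw [Finset.sum_congr rfl this, Finset.sum_ite_eq' S s (fun y => y)]
    exact if_pos hs
  have hindobj : ∑ y ∈ S, (if y = s then (1:ℝ) else 0) * ‖y‖^2 = ‖s‖^2 := by
    have : ∀ y ∈ S, (if y = s then (1:ℝ) else 0) * ‖y‖^2 = if y = s then ‖y‖^2 else 0 := by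
      intro y _
      split_ifs <;> ring
    rw [Finset.sum_congr rfl this, Finset.sum_ite_eq' S s (fun y => ‖y‖^2)]
    exact if_pos hs
  have hv'0 : ∀ y ∈ S, 0 ≤ v' y := by
    intro y hyS
    by_cases hyY : y ∈ Y
    · have h1 := htle y hyY
      have h2 : -(t * |γ y|) ≤ -(t * γ y) := by
        have := le_abs_self (γ y)
        nlinarith
      simp only [hv']
      split_ifs with h
      · nlinarith
      · nlinarith
    · have hwy : w y = 0 := hw_outY y hyY
      simp only [hv', hwy, hγ_zero y hwy]
      split_ifs with h
      · nlinarith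
      · nlinarith
  have hv'1 : ∑ y ∈ S, v' y = 1 := by
    have : ∀ y ∈ S, v' y
        = w y + (t * (if y = s then (1:ℝ) else 0) - t * γ y) := by
      intro y _; simp only [hv']; ring
    rw [Finset.sum_congr rfl this, Finset.sum_add_distrib, Finset.sum_sub_distrib,
      ← Finset.mul_sum, ← Finset.mul_sum, hind1, hγ1, hwF.2.1]
    ring
  have hv'x : ∑ y ∈ S, v' y • y = x := by
    have : ∀ y ∈ S, v' y • y
        = w y • y + ((t * (if y = s then (1:ℝ) else 0)) • y - (t * γ y) • y) := by
      intro y _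
      simp only [hv']
      module
    rw [Finset.sum_congr rfl this, Finset.sum_add_distrib, Finset.sum_sub_distrib]
    have e1 : ∑ y ∈ S, (t * (if y = s then (1:ℝ) else 0)) • y
        = t • ∑ y ∈ S, (if y = s then (1:ℝ) else 0) • y := by
      rw [Finset.smul_sum]
      exact Finset.sum_congr rfl fun y _ => by rw [mul_smul]
    have e2 : ∑ y ∈ S, (t * γ y) • y = t • ∑ y ∈ S, γ y • y := by
      rw [Finset.smul_sum]
      exact Finset.sum_congr rfl fun y _ => by rw [mul_smul]
    rw [e1, e2, hindx, hγx, hwF.2.2.1, sub_self, add_zero]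
  have hobj : ∑ y ∈ S, v' y * ‖y‖^2 < m := by
    have hexp : ∀ y ∈ S, v' y * ‖y‖^2
        = w y * ‖y‖^2 + (t * ((if y = s then (1:ℝ) else 0) * ‖y‖^2) - t * (γ y * ‖y‖^2)) := by
      intro y _; simp only [hv']; ring
    rw [Finset.sum_congr rfl hexp, Finset.sum_add_distrib, Finset.sum_sub_distrib,
      ← Finset.mul_sum, ← Finset.mul_sum, hindobj, hγobj, hwm]
    nlinarith
  have := hvmin v' hv'0 hv'1 hv'x
  linarith

lemma interior_union_eq_empty {X : Type*} [TopologicalSpace X] {A B : Set X}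
    (hA : IsClosed A) (hB : IsClosed B) (hiA : interior A = ∅) (hiB : interior B = ∅) :
    interior (A ∪ B) = ∅ := by
  rw [interior_eq_empty_iff_dense_compl] at *
  rw [Set.compl_union]
  exact hiA.inter_of_isOpen_left hiB hA.isOpen_compl

lemma interior_biUnion_eq_empty {X ι : Type*} [TopologicalSpace X] (I : Finset ι) (f : ι → Set X)
    (hcl : ∀ i ∈ I, IsClosed (f i)) (hint : ∀ i ∈ I, interior (f i) = ∅) :
    interior (⋃ i ∈ I, f i) = ∅ := by
  classical
  induction I using Finset.induction with
  | empty => simp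
  | @insert a I ha ih =>
    rw [Finset.set_biUnion_insert]
    refine interior_union_eq_empty (hcl a (Finset.mem_insert_self a I)) ?_
      (hint a (Finset.mem_insert_self a I)) ?_
    · exact I.finite_toSet.isClosed_biUnion fun i hi => hcl i (Finset.mem_insert_of_mem hi)
    · exact ih (fun i hi => hcl i (Finset.mem_insert_of_mem hi))
        (fun i hi => hint i (Finset.mem_insert_of_mem hi))

lemma interior_affineSubspace_empty {d : ℕ} (A : AffineSubspace ℝ (E d)) (hA : A ≠ ⊤) :
    interior (A : Set (E d)) = ∅ := by
  by_contra h
  have hne : (interior (A : Set (E d))).Nonempty := Set.nonempty_iff_ne_empty.mpr h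
  have h2 : affineSpan ℝ (A : Set (E d)) = ⊤ :=
    affineSpan_eq_top_of_nonempty_interior (by rwa [(A.convex).convexHull_eq])
  rw [AffineSubspace.affineSpan_coe] at h2
  exact hA h2

lemma span_small_ne_top {d : ℕ} (t : Finset (E d)) (h : t.card ≤ d) :
    affineSpan ℝ (t : Set (E d)) ≠ ⊤ := by
  classical
  intro htop
  rcases t.eq_empty_or_nonempty with rfl | hne
  · rw [Finset.coe_empty, AffineSubspace.span_empty] at htop
    exact bot_ne_top htop
  · have hcard : t.card = (t.card - 1) + 1 := by
      have := Finset.card_pos.mpr hne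
      omega
    have h1 := finrank_vectorSpan_image_finset_le ℝ (id : (E d) → (E d)) t hcard
    rw [Finset.image_id] at h1
    have h2 : vectorSpan ℝ (t : Set (E d)) = ⊤ :=
      AffineSubspace.vectorSpan_eq_top_of_affineSpan_eq_top ℝ _ _ htop
    rw [h2, finrank_top, finrank_euclideanSpace_fin] at h1
    omega



set_option maxHeartbeats 1000000 in
/-- If `S ⊆ ℝ^d` is a finite set whose affine span is all of `ℝ^d`, then
every point of the convex hull of `S` lies in the convex hull of the vertices of some
Delaunay simplex of `S` (existence of a Delaunay triangulation covering `conv S`). -/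
theorem delaunay_triangulation_exists (d : ℕ) (hd : 1 ≤ d)
    (S : Finset (EuclideanSpace ℝ (Fin d)))
    (hspan : affineSpan ℝ (S : Set (EuclideanSpace ℝ (Fin d))) = ⊤)
    (x : EuclideanSpace ℝ (Fin d))
    (hx : x ∈ convexHull ℝ (S : Set (EuclideanSpace ℝ (Fin d)))) :
    ∃ τ : Affine.Simplex ℝ (EuclideanSpace ℝ (Fin d)) d,
      (∀ i, τ.points i ∈ S) ∧
      x ∈ convexHull ℝ (Set.range τ.points) ∧
      ∀ s ∈ S, τ.circumradius ≤ dist s τ.circumcenter := by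
  classical
  set C : Set (E d) := convexHull ℝ (S : Set (E d)) with hC
  -- the bad set: affine spans of small subsets of S
  set Bad : Finset (Finset (E d)) := S.powerset.filter (fun t => t.card ≤ d) with hBad
  set B : Set (E d) := ⋃ t ∈ Bad, (affineSpan ℝ (t : Set (E d)) : Set (E d)) with hB
  have hBclosed : IsClosed B :=
    Bad.finite_toSet.isClosed_biUnion fun t _ =>
      (affineSpan ℝ (t : Set (E d))).closed_of_finiteDimensional
  have hBint : interior B = ∅ := by
    refine interior_biUnion_eq_empty Bad _ (fun t _ => ?_) (fun t ht => ?_)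
    · exact (affineSpan ℝ (t : Set (E d))).closed_of_finiteDimensional
    · exact interior_affineSubspace_empty _
        (span_small_ne_top t (Finset.mem_filter.mp ht).2)
  -- the union of hulls of Delaunay simplices
  set Q : Finset (E d) → Prop := fun t =>
    ∃ τ : Affine.Simplex ℝ (EuclideanSpace ℝ (Fin d)) d,
      (∀ i, τ.points i ∈ S) ∧ Set.range τ.points = (t : Set (E d)) ∧
      ∀ s ∈ S, τ.circumradius ≤ dist s τ.circumcenter with hQ
  set A : Set (E d) := ⋃ t ∈ S.powerset.filter Q, convexHull ℝ (t : Set (E d)) with hA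
  have hAclosed : IsClosed A :=
    (S.powerset.filter Q).finite_toSet.isClosed_biUnion fun t _ =>
      t.finite_toSet.isClosed_convexHull (𝕜 := ℝ)
  -- generic points lie in A
  have hsub : C \ B ⊆ A := by
    rintro z ⟨hzC, hzB⟩
    have hgen : ∀ t : Finset (E d), t ⊆ S → t.card ≤ d →
        z ∉ affineSpan ℝ (t : Set (E d)) := by
      intro t htS htc hzt
      exact hzB (Set.mem_biUnion
        (Finset.mem_filter.mpr ⟨Finset.mem_powerset.mpr htS, htc⟩) hzt)
    obtain ⟨τ, hτS, hτz, hτdel⟩ := delaunay_generic d S z hzC hgen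
    set t : Finset (E d) := Finset.univ.image τ.points with ht
    have htS : t ⊆ S := by
      intro y hy
      obtain ⟨i, _, rfl⟩ := Finset.mem_image.mp hy
      exact hτS i
    have htrange : Set.range τ.points = (t : Set (E d)) := by
      rw [ht, Finset.coe_image, Finset.coe_univ, Set.image_univ]
    refine Set.mem_biUnion (Finset.mem_filter.mpr
      ⟨Finset.mem_powerset.mpr htS, τ, hτS, htrange, hτdel⟩) ?_
    rwa [← htrange]
  -- density
  obtain ⟨x₀, hx₀⟩ : (interior C).Nonempty :=
    interior_convexHull_nonempty_iff_affineSpan_eq_top.mpr hspan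
  have hconv : Convex ℝ C := convex_convexHull ℝ _
  have hxcl : x ∈ closure (interior C) := by
    have htend : Filter.Tendsto (fun tt : ℝ => x + tt • (x₀ - x))
        (nhdsWithin 0 (Set.Ioi 0)) (nhds x) := by
      have hcont : Continuous fun tt : ℝ => x + tt • (x₀ - x) :=
        continuous_const.add (continuous_id.smul continuous_const)
      have h0 := hcont.tendsto 0
      simp only [zero_smul, add_zero] at h0
      exact h0.mono_left nhdsWithin_le_nhds
    refine mem_closure_of_tendsto htend ?_
    filter_upwards [Ioc_mem_nhdsGT_of_mem (Set.left_mem_Ico.mpr zero_lt_one)] with tt htt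
    exact hconv.add_smul_sub_mem_interior hx hx₀ htt
  have hstep : interior C ⊆ closure (interior C \ B) := by
    intro u hu
    rw [mem_closure_iff]
    intro V hV hVu
    by_contra hempty
    rw [Set.not_nonempty_iff_eq_empty] at hempty
    have hWB : V ∩ interior C ⊆ B := by
      intro z hz
      by_contra hzB
      exact Set.eq_empty_iff_forall_notMem.mp hempty z ⟨hz.1, hz.2, hzB⟩
    have hWopen : IsOpen (V ∩ interior C) := hV.inter isOpen_interior
    have : V ∩ interior C ⊆ interior B := hWopen.subset_interior_iff.mpr hWB
    rw [hBint] at this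
    exact this ⟨hVu, hu⟩ 
  have hxA : x ∈ A := by
    refine hAclosed.closure_eq ▸ ?_
    have h1 : closure (interior C) ⊆ closure (interior C \ B) := by
      rw [← closure_closure (s := interior C \ B)]
      exact closure_mono hstep
    have h2 : interior C \ B ⊆ A := fun z hz => hsub ⟨interior_subset hz.1, hz.2⟩
    exact closure_mono h2 (h1 hxcl)
  simp only [hA, Set.mem_iUnion] at hxA
  obtain ⟨t, ht, hxt⟩ := hxA
  obtain ⟨τ, hτS, hτrange, hτdel⟩ := (Finset.mem_filter.mp ht).2
  exact ⟨τ, hτS, by rwa [hτrange], hτdel⟩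
end
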